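/- For β > 0 sufficiently small, specifically β < 1/(2M) where M = max_k c_k with c_k ≥ 0 the switching gains, every global minimizer of g(x) = Σ_k c_k(1−x_k) + (1/β)Σ_k x_k(1−x_k) over the feasible set F = {x ∈ [0,1]^K : Σ_k x_k ≤ S}, with S an integer, has all coordinates in {0,1}. -/
import Mathlib

private lemma sum_upd1 {K : ℕ} (j : Fin K) (f : Fin K → ℝ → ℝ) (x : Fin K → ℝ) (u : ℝ) :
    ∑ k, f k (Function.update x j u k)
      = ∑ k, f k (x k) + (f j u - f j (x j)) := by
  have h : ∑ k, (f k (Function.update x j u k) - f k (x k)) = f j u - f j (x j) := by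
    rw [Finset.sum_eq_single j]
    · simp
    · intro k _ hk
      rw [Function.update_of_ne hk]
      ring
    · simp
  have := Finset.sum_sub_distrib (f := fun k => f k (Function.update x j u k))
      (g := fun k => f k (x k)) (s := Finset.univ)
  linarith [h, this]

private lemma sum_upd2 {K : ℕ} (j l : Fin K) (hjl : j ≠ l) (f : Fin K → ℝ → ℝ)
    (x : Fin K → ℝ) (u v : ℝ) :
    ∑ k, f k (Function.update (Function.update x j u) l v k)
      = ∑ k, f k (x k) + (f j u - f j (x j)) + (f l v - f l (x l)) := by
  rw [sum_upd1 l, sum_upd1 j]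
  rw [Function.update_of_ne (Ne.symm hjl)]

/-- Exact penalty: if β < 1/(2M) with M = max_k c_k, then every global minimizer of
g(x) = Σ c_k(1−x_k) + (1/β)Σ x_k(1−x_k) over F = {x ∈ [0,1]^K : Σ x_k ≤ S}
has all coordinates in {0,1}. -/
theorem stmt_17 (K S : ℕ) (c : Fin K → ℝ) (hc : ∀ k, 0 ≤ c k)
    (M : ℝ) (hM : IsGreatest (Set.range c) M)
    (β : ℝ) (hβ : 0 < β) (hβM : β < 1 / (2 * M))
    (xstar : Fin K → ℝ)
    (hmem : (∀ k, xstar k ∈ Set.Icc (0 : ℝ) 1) ∧ ∑ k, xstar k ≤ (S : ℝ))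
    (hopt : ∀ y : Fin K → ℝ, (∀ k, y k ∈ Set.Icc (0 : ℝ) 1) → (∑ k, y k ≤ (S : ℝ)) →
      (∑ k, c k * (1 - xstar k)) + (1 / β) * ∑ k, xstar k * (1 - xstar k) ≤
        (∑ k, c k * (1 - y k)) + (1 / β) * ∑ k, y k * (1 - y k)) :
    ∀ k, xstar k = 0 ∨ xstar k = 1 := by
  intro j
  by_contra hcon
  push_neg at hcon
  obtain ⟨hj0, hj1⟩ := hcon
  have hβ' : 0 < 1 / β := by positivity
  set a := xstar j with ha
  have ha0 : 0 < a := lt_of_le_of_ne (hmem.1 j).1 (Ne.symm hj0)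
  have ha1 : a < 1 := lt_of_le_of_ne (hmem.1 j).2 hj1
  by_cases hex : ∃ l, l ≠ j ∧ xstar l ≠ 0 ∧ xstar l ≠ 1
  · -- two fractional coordinates
    obtain ⟨l, hlj, hl0, hl1⟩ := hex
    set b := xstar l with hb
    have hb0 : 0 < b := lt_of_le_of_ne (hmem.1 l).1 (Ne.symm hl0)
    have hb1 : b < 1 := lt_of_le_of_ne (hmem.1 l).2 hl1
    set ε : ℝ := min (min a (1 - a)) (min b (1 - b)) with hε
    have hεpos : 0 < ε := by
      apply lt_min <;> apply lt_min <;> linarith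
    have hεa : ε ≤ a := le_trans (min_le_left _ _) (min_le_left _ _)
    have hεa1 : ε ≤ 1 - a := le_trans (min_le_left _ _) (min_le_right _ _)
    have hεb : ε ≤ b := le_trans (min_le_right _ _) (min_le_left _ _)
    have hεb1 : ε ≤ 1 - b := le_trans (min_le_right _ _) (min_le_right _ _)
    have hjl : j ≠ l := fun h => hlj h.symm
    have key : ∀ t : ℝ, |t| ≤ ε →
        0 ≤ (c l - c j) * t + (1 / β) * ((2*b - 2*a) * t - 2 * t^2) := by
      intro t ht
      have ht1 : -ε ≤ t := neg_le_of_abs_le ht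
      have ht2 : t ≤ ε := le_of_abs_le ht
      set y := Function.update (Function.update xstar j (a + t)) l (b - t) with hy
      have hyj : y j = a + t := by
        rw [hy, Function.update_of_ne hjl, Function.update_self]
      have hyl : y l = b - t := by rw [hy, Function.update_self]
      have hyk : ∀ k, k ≠ j → k ≠ l → y k = xstar k := by
        intro k hk1 hk2
        rw [hy, Function.update_of_ne hk2, Function.update_of_ne hk1]
      have hfeas : ∀ k, y k ∈ Set.Icc (0 : ℝ) 1 := by
        intro k
        by_cases h1 : k = l
        · subst h1; rw [hyl]; constructor <;> [linarith; linarith]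
        · by_cases h2 : k = j
          · subst h2; rw [hyj]; constructor <;> [linarith; linarith]
          · rw [hyk k h2 h1]; exact hmem.1 k
      have hsum : ∑ k, y k ≤ (S : ℝ) := by
        have := sum_upd2 j l hjl (fun _ u => u) xstar (a + t) (b - t)
        rw [hy]
        rw [this]
        have := hmem.2
        simp only [← ha, ← hb]
        linarith
      have h1 := hopt y hfeas hsum
      have e1 : ∑ k, c k * (1 - y k)
          = ∑ k, c k * (1 - xstar k) + (c j * (1 - (a+t)) - c j * (1 - a))
            + (c l * (1 - (b-t)) - c l * (1 - b)) := by
        rw [hy]; exact sum_upd2 j l hjl (fun k u => c k * (1 - u)) xstar (a + t) (b - t)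
      have e2 : ∑ k, y k * (1 - y k)
          = ∑ k, xstar k * (1 - xstar k) + ((a+t) * (1 - (a+t)) - a * (1 - a))
            + ((b-t) * (1 - (b-t)) - b * (1 - b)) := by
        rw [hy]; exact sum_upd2 j l hjl (fun _ u => u * (1 - u)) xstar (a + t) (b - t)
      rw [e1, e2] at h1
      nlinarith [h1]
    have K1 := key ε (by rw [abs_of_pos hεpos])
    have K2 := key (-ε) (by rw [abs_neg, abs_of_pos hεpos])
    nlinarith [mul_pos hβ' (mul_pos hεpos hεpos), K1, K2]
  · -- all other coordinates binary
    push_neg at hex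
    set y := Function.update xstar j (1 : ℝ) with hy
    have hyj : y j = 1 := Function.update_self _ _ _
    have hyk : ∀ k, k ≠ j → y k = xstar k := fun k hk => Function.update_of_ne hk _ _
    obtain ⟨n, hn⟩ : ∃ n : ℕ, ∑ k ∈ Finset.univ.erase j, xstar k = (n : ℝ) := by
      refine ⟨(Finset.filter (fun k => xstar k = 1) (Finset.univ.erase j)).card, ?_⟩
      rw [← Finset.sum_boole]
      apply Finset.sum_congr rfl
      intro k hk
      have hk' : k ≠ j := Finset.ne_of_mem_erase hk
      rcases Classical.em (xstar k = 0) with h | h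
      · rcases Classical.em (xstar k = 1) with h1 | h1
        · simp [h1]
        · simp [h, h1]
      · have h1 := hex k hk' h
        simp [h1]
    have hsplit : ∑ k, xstar k = (n : ℝ) + a := by
      rw [← Finset.sum_erase_add Finset.univ xstar (Finset.mem_univ j), hn, ← ha]
    have hnS : (n : ℝ) + a ≤ S := by rw [← hsplit]; exact hmem.2
    have hnltS : n < S := by
      have : (n : ℝ) < S := by linarith
      exact_mod_cast this
    have hn1S : (n : ℝ) + 1 ≤ S := by exact_mod_cast hnltS
    have hfeas : ∀ k, y k ∈ Set.Icc (0 : ℝ) 1 := by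
      intro k
      by_cases hk : k = j
      · subst hk; rw [hyj]; exact ⟨zero_le_one, le_refl 1⟩
      · rw [hyk k hk]; exact hmem.1 k
    have hsum : ∑ k, y k ≤ (S : ℝ) := by
      rw [← Finset.sum_erase_add Finset.univ y (Finset.mem_univ j), hyj]
      have : ∑ k ∈ Finset.univ.erase j, y k = (n : ℝ) := by
        rw [← hn]
        exact Finset.sum_congr rfl fun k hk => hyk k (Finset.ne_of_mem_erase hk)
      rw [this]
      exact hn1S
    have h1 := hopt y hfeas hsum
    have e1 : ∑ k, c k * (1 - y k)
        = ∑ k, c k * (1 - xstar k) + (c j * (1 - 1) - c j * (1 - a)) := by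
      rw [hy]; exact sum_upd1 j (fun k u => c k * (1 - u)) xstar 1
    have e2 : ∑ k, y k * (1 - y k)
        = ∑ k, xstar k * (1 - xstar k) + (1 * (1 - 1) - a * (1 - a)) := by
      rw [hy]; exact sum_upd1 j (fun _ u => u * (1 - u)) xstar 1
    rw [e1, e2] at h1
    nlinarith [hc j, mul_pos hβ' (mul_pos ha0 (by linarith : (0:ℝ) < 1 - a)), h1]
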